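/- arXiv:1711.05101 — 5 statements merged into one kernel-verified Lean document; each statement's English description precedes it below -/
import Mathlib

section
/- Let n be a positive natural number, let α > 0 and λ ∈ ℝ, and set λ' = λ/α. Let (f_t)_{t∈ℕ} be a sequence of differentiable batch loss functions f_t : EuclideanSpace ℝ (Fin n) → ℝ, and define f_t^reg(θ) = f_t(θ) + (λ'/2)·‖θ‖². Let (x_t) and (y_t) be sequences in EuclideanSpace ℝ (Fin n) with x_0 = y_0, satisfying the recurrences x_{t+1} = x_t − α·∇f_t^reg(x_t) (standard SGD on the L₂-regularized losses) and y_{t+1} = (1 − λ)·y_t − α·∇f_t(y_t) (SGD with decoupled weight decay λ on the unregularized losses). Then x_t = y_t for all t ∈ ℕ. -/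
open InnerProductSpace

section Gradient

variable {F : Type*} [NormedAddCommGroup F] [InnerProductSpace ℝ F] [CompleteSpace F]
  {f g : F → ℝ} {f' g' x : F}

theorem HasGradientAt.add (hf : HasGradientAt f f' x) (hg : HasGradientAt g g' x) :
    HasGradientAt (fun y => f y + g y) (f' + g') x := by
  rw [hasGradientAt_iff_hasFDerivAt, map_add]
  exact hf.hasFDerivAt.add hg.hasFDerivAt

theorem HasGradientAt.const_mul (c : ℝ) (hf : HasGradientAt f f' x) :
    HasGradientAt (fun y => c * f y) (c • f') x := by
  rw [hasGradientAt_iff_hasFDerivAt, map_smul]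
  exact hf.hasFDerivAt.const_mul c

theorem hasGradientAt_norm_sq (x : F) : HasGradientAt (fun y => ‖y‖ ^ 2) ((2 : ℝ) • x) x := by
  rw [hasGradientAt_iff_hasFDerivAt]
  refine (hasStrictFDerivAt_norm_sq x).hasFDerivAt.congr_fderiv ?_
  ext v
  simp [toDual_apply_apply]

theorem gradient_add_half_mul_norm_sq (hf : DifferentiableAt ℝ f x) (c : ℝ) :
    gradient (fun y => f y + c / 2 * ‖y‖ ^ 2) x = gradient f x + c • x := by
  have h := hf.hasGradientAt.add ((hasGradientAt_norm_sq x).const_mul (c / 2))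
  rw [smul_smul, div_mul_cancel₀ c two_ne_zero] at h
  exact h.gradient

end Gradient

theorem sgd_l2_iterates_eq_weight_decay_iterates_general
    (n : ℕ) (α lam : ℝ) (hα : 0 < α)
    (f : ℕ → EuclideanSpace ℝ (Fin n) → ℝ) (hf : ∀ t, Differentiable ℝ (f t))
    (freg : ℕ → EuclideanSpace ℝ (Fin n) → ℝ)
    (hfreg : ∀ t θ, freg t θ = f t θ + ((lam / α) / 2) * ‖θ‖ ^ 2)
    (x y : ℕ → EuclideanSpace ℝ (Fin n))
    (h0 : x 0 = y 0)
    (hx : ∀ t, x (t + 1) = x t - α • gradient (freg t) (x t))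
    (hy : ∀ t, y (t + 1) = (1 - lam) • y t - α • gradient (f t) (y t)) :
    ∀ t, x t = y t := by
  intro t
  induction t with
  | zero => exact h0
  | succ t ih =>
    have hgrad : gradient (freg t) (y t) = gradient (f t) (y t) + (lam / α) • y t := by
      rw [funext (hfreg t)]
      exact gradient_add_half_mul_norm_sq (hf t (y t)) (lam / α)
    rw [hx t, hy t, ih, hgrad, smul_add, smul_smul, mul_div_cancel₀ lam hα.ne']
    module

/-- Proposition 1 (iterates): SGD with learning rate `α` on the L₂-regularized batch losses
`f_t^reg θ = f_t θ + (λ'/2)‖θ‖²` with `λ' = λ/α` produces the same iterates as SGD with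
decoupled weight decay `λ` on the unregularized batch losses `f_t`. -/
theorem sgd_l2_iterates_eq_weight_decay_iterates
    (n : ℕ) (hn : 0 < n) (α lam : ℝ) (hα : 0 < α)
    (f : ℕ → EuclideanSpace ℝ (Fin n) → ℝ) (hf : ∀ t, Differentiable ℝ (f t))
    (freg : ℕ → EuclideanSpace ℝ (Fin n) → ℝ)
    (hfreg : ∀ t θ, freg t θ = f t θ + ((lam / α) / 2) * ‖θ‖ ^ 2)
    (x y : ℕ → EuclideanSpace ℝ (Fin n))
    (h0 : x 0 = y 0)
    (hx : ∀ t, x (t + 1) = x t - α • gradient (freg t) (x t))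
    (hy : ∀ t, y (t + 1) = (1 - lam) • y t - α • gradient (f t) (y t)) :
    ∀ t, x t = y t :=
  sgd_l2_iterates_eq_weight_decay_iterates_general n α lam hα f hf freg hfreg x y h0 hx hy
end

section
/- Let n be a positive natural number, α ≠ 0, λ, λ' ∈ ℝ, and let M : EuclideanSpace ℝ (Fin n) →ₗ[ℝ] EuclideanSpace ℝ (Fin n) be a linear map (the preconditioner). Suppose that for every vector g and every point θ in EuclideanSpace ℝ (Fin n), the L₂-regularized preconditioned update equals the weight-decay preconditioned update, i.e. θ − α·λ'·M θ − α·M g = (1 − λ)·θ − α·M g. Then α·λ'·M = λ·id, i.e. α·λ'·(M θ) = λ·θ for all θ. -/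
/-- If the L₂-regularized preconditioned update agrees with the weight-decay preconditioned
update for every gradient `g` and every point `θ`, then `α·λ'·M = λ·id`. -/
theorem preconditioned_update_eq_imp_scalar
    (n : ℕ) (hn : 0 < n) (α lam lam' : ℝ) (hα : α ≠ 0)
    (M : EuclideanSpace ℝ (Fin n) →ₗ[ℝ] EuclideanSpace ℝ (Fin n))
    (h : ∀ g θ : EuclideanSpace ℝ (Fin n),
      θ - (α * lam') • M θ - α • M g = (1 - lam) • θ - α • M g) :
    ∀ θ : EuclideanSpace ℝ (Fin n), (α * lam') • M θ = lam • θ := by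
  intro θ
  have h0 := h 0 θ
  have h1 : θ - (α * lam') • M θ = (1 - lam) • θ := by
    simpa using congrArg (· + α • M 0) h0
  have : (α * lam') • M θ = θ - (1 - lam) • θ := by
    rw [← h1]; abel
  rw [this, sub_smul, one_smul]; abel
end

section
/- Let n be a positive natural number, α ≠ 0, λ > 0, and let M : EuclideanSpace ℝ (Fin n) →ₗ[ℝ] EuclideanSpace ℝ (Fin n) be a linear map such that M ≠ k·id for every k ∈ ℝ. Then there exists no λ' ∈ ℝ such that for every vector g and every point θ in EuclideanSpace ℝ (Fin n), θ − α·λ'·M θ − α·M g = (1 − λ)·θ − α·M g. In other words, for an optimizer whose preconditioner is not a scalar multiple of the identity, no L₂ regularization coefficient λ' reproduces the iterates of decoupled weight decay with rate λ. -/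
/-- Proposition 2: for an optimizer whose preconditioner `M` is not a scalar multiple of the
identity, no L₂ regularization coefficient `λ'` reproduces the iterates of decoupled weight
decay with rate `λ > 0`. -/
theorem no_l2_coeff_for_nonscalar_preconditioner
    (n : ℕ) (hn : 0 < n) (α lam : ℝ) (hα : α ≠ 0) (hlam : 0 < lam)
    (M : EuclideanSpace ℝ (Fin n) →ₗ[ℝ] EuclideanSpace ℝ (Fin n))
    (hM : ∀ k : ℝ, M ≠ k • LinearMap.id) :
    ¬ ∃ lam' : ℝ, ∀ g θ : EuclideanSpace ℝ (Fin n),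
      θ - (α * lam') • M θ - α • M g = (1 - lam) • θ - α • M g := by
  rintro ⟨lam', h⟩
  have key : ∀ θ : EuclideanSpace ℝ (Fin n), (α * lam') • M θ = lam • θ := by
    intro θ
    have h0 := h 0 θ
    simp only [map_zero, smul_zero, sub_zero] at h0
    have h1 : (α * lam') • M θ = θ - (1 - lam) • θ := by rw [← h0]; abel
    rw [h1, sub_smul, one_smul]; abel
  by_cases hc : α * lam' = 0
  · have := key (EuclideanSpace.single ⟨0, hn⟩ 1)
    rw [hc, zero_smul] at this
    have hθ : (lam • (EuclideanSpace.single ⟨0, hn⟩ (1:ℝ)) : EuclideanSpace ℝ (Fin n)) ⟨0, hn⟩ = 0 := by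
      rw [← this]; rfl
    simp [EuclideanSpace.single_apply] at hθ
    exact hlam.ne' hθ
  · apply hM (lam / (α * lam'))
    refine LinearMap.ext fun θ => ?_
    have hMθ : M θ = (lam / (α * lam')) • θ := by
      rw [div_eq_inv_mul, mul_smul, ← key θ, inv_smul_smul₀ hc]
    simpa using hMθ
end

section
/- Let n ≥ 2, α ≠ 0, λ > 0, and let s : Fin n → ℝ with s i > 0 for all i, and suppose there exist indices i ≠ j with s i ≠ s j. Let M be the diagonal linear map on EuclideanSpace ℝ (Fin n) given by (M θ) i = (θ i)/(s i), i.e. M = diag(s)⁻¹. Then there exists no λ' ∈ ℝ such that for every vector g and every point θ in EuclideanSpace ℝ (Fin n), θ − α·λ'·M θ − α·M g = (1 − λ)·θ − α·M g. That is, for an adaptive gradient method whose diagonal preconditioner diag(s)⁻¹ has at least two distinct diagonal entries, no L₂ regularization coefficient reproduces decoupled weight decay. -/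
/-- For an adaptive gradient method whose diagonal preconditioner `diag(s)⁻¹` has at least two
distinct diagonal entries, no L₂ regularization coefficient reproduces decoupled weight decay. -/
theorem no_l2_coeff_for_nonconstant_diagonal_preconditioner
    (n : ℕ) (hn : 2 ≤ n) (α lam : ℝ) (hα : α ≠ 0) (hlam : 0 < lam)
    (s : Fin n → ℝ) (hs : ∀ i, 0 < s i)
    (i j : Fin n) (hij : i ≠ j) (hsij : s i ≠ s j)
    (M : EuclideanSpace ℝ (Fin n) →ₗ[ℝ] EuclideanSpace ℝ (Fin n))
    (hM : ∀ (θ : EuclideanSpace ℝ (Fin n)) (k : Fin n), M θ k = θ k / s k) :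
    ¬ ∃ lam' : ℝ, ∀ g θ : EuclideanSpace ℝ (Fin n),
      θ - (α * lam') • M θ - α • M g = (1 - lam) • θ - α • M g := by
  rintro ⟨lam', h⟩
  have key : ∀ k : Fin n, α * lam' = lam * s k := by
    intro k
    have h1 := congrArg (fun v : EuclideanSpace ℝ (Fin n) => v k)
      (h 0 (EuclideanSpace.single k (1 : ℝ)))
    simp only [PiLp.sub_apply, PiLp.smul_apply, smul_eq_mul, hM,
      EuclideanSpace.single_apply, if_pos rfl, map_zero, PiLp.zero_apply,
      zero_div, mul_zero, sub_zero] at h1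
    have hsk := (hs k).ne'
    field_simp at h1
    linarith
  have := (key i).symm.trans (key j)
  exact hsij (mul_left_cancel₀ hlam.ne' this)
end

section
/- Let n be a positive natural number, α > 0, λ ∈ ℝ, and set λ' = λ/α. Let s : Fin n → ℝ with s i > 0 for all i, and let M be the diagonal linear map on EuclideanSpace ℝ (Fin n) with (M θ) i = (θ i)/(s i). Let (f_t)_{t∈ℕ} be a sequence of differentiable batch losses f_t : EuclideanSpace ℝ (Fin n) → ℝ, and define f_t^sreg(θ) = f_t(θ) + (λ'/2)·∑_i s i·(θ i)². Let (x_t) and (y_t) be sequences with x_0 = y_0 satisfying x_{t+1} = x_t − α·M(∇f_t^sreg(x_t)) and y_{t+1} = (1 − λ)·y_t − α·M(∇f_t(y_t)). Then x_t = y_t for all t ∈ ℕ; i.e. the preconditioned method with fixed preconditioner diag(s)⁻¹ executes the same steps on the scale-adjusted regularized losses without weight decay as it executes on the unregularized losses with decoupled weight decay λ. -/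
/-!
The gradient of the scale-adjusted regularizer `(λ/2α)·∑ i, s i·(θ i)²` is `(λ/α)·(s ⊙ θ)`, and
the preconditioner `diag(s)⁻¹` maps `α` times it back to `λ·θ`. Hence one preconditioned step on
the regularized loss is exactly one step on the plain loss with decoupled weight decay `λ`, and
the two sequences of iterates agree by induction.
-/

open InnerProductSpace

theorem hasGradientAt_sum_mul_sq {ι : Type*} [Fintype ι] (w : ι → ℝ) (θ : EuclideanSpace ℝ ι) :
    HasGradientAt (fun θ : EuclideanSpace ℝ ι => ∑ i, w i * θ i ^ 2)
      (WithLp.toLp 2 fun i => 2 * (w i * θ i)) θ := by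
  rw [hasGradientAt_iff_hasFDerivAt]
  have hcoord (i : ι) : HasFDerivAt (fun θ : EuclideanSpace ℝ ι => w i * θ i ^ 2)
      (w i • (2 * θ i) • EuclideanSpace.proj (𝕜 := ℝ) i) θ := by
    simpa using ((EuclideanSpace.proj (𝕜 := ℝ) i).hasFDerivAt (x := θ) |>.pow 2).const_mul (w i)
  refine (HasFDerivAt.fun_sum fun i _ => hcoord i).congr_fderiv ?_
  ext v
  simp only [FunLike.coe_sum, Finset.sum_apply, smul_apply,
    toDual_apply_apply, PiLp.inner_apply, RCLike.inner_apply, conj_trivial, PiLp.proj_apply,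
    smul_eq_mul]
  exact Finset.sum_congr rfl fun i _ => by ring

theorem gradient_add_half_mul_sum_mul_sq {ι : Type*} [Fintype ι] {f : EuclideanSpace ℝ ι → ℝ}
    {θ : EuclideanSpace ℝ ι} (hf : DifferentiableAt ℝ f θ) (c : ℝ) (w : ι → ℝ) :
    gradient (fun θ : EuclideanSpace ℝ ι => f θ + c / 2 * ∑ i, w i * θ i ^ 2) θ
      = gradient f θ + c • WithLp.toLp 2 fun i => w i * θ i := by
  rw [(hf.hasGradientAt.add ((hasGradientAt_sum_mul_sq w θ).const_mul (c / 2))).gradient]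
  congr 1
  ext i
  simp only [PiLp.smul_apply, smul_eq_mul]
  ring

theorem map_toLp_mul_eq_self {ι : Type*} [Fintype ι] {s : ι → ℝ} (hs : ∀ i, s i ≠ 0)
    {M : EuclideanSpace ℝ ι →ₗ[ℝ] EuclideanSpace ℝ ι} (hM : ∀ θ i, M θ i = θ i / s i)
    (θ : EuclideanSpace ℝ ι) : M (WithLp.toLp 2 fun i => s i * θ i) = θ := by
  ext i
  rw [hM, PiLp.toLp_apply, mul_div_cancel_left₀ _ (hs i)]

theorem sub_smul_map_add_div_smul {E : Type*} [AddCommGroup E] [Module ℝ E] (M : E →ₗ[ℝ] E)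
    {α : ℝ} (hα : α ≠ 0) (lam : ℝ) {θ v : E} (hv : M v = θ) (g : E) :
    θ - α • M (g + (lam / α) • v) = (1 - lam) • θ - α • M g := by
  rw [map_add, map_smul, hv, smul_add, smul_smul, mul_div_cancel₀ lam hα]
  module

theorem preconditioned_sreg_iterates_eq_weight_decay_iterates_general
    (n : ℕ) (α lam : ℝ) (hα : 0 < α)
    (s : Fin n → ℝ) (hs : ∀ i, 0 < s i)
    (M : EuclideanSpace ℝ (Fin n) →ₗ[ℝ] EuclideanSpace ℝ (Fin n))
    (hM : ∀ (θ : EuclideanSpace ℝ (Fin n)) (i : Fin n), M θ i = θ i / s i)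
    (f : ℕ → EuclideanSpace ℝ (Fin n) → ℝ) (hf : ∀ t, Differentiable ℝ (f t))
    (fsreg : ℕ → EuclideanSpace ℝ (Fin n) → ℝ)
    (hfsreg : ∀ (t : ℕ) (θ : EuclideanSpace ℝ (Fin n)),
      fsreg t θ = f t θ + ((lam / α) / 2) * ∑ i, s i * (θ i) ^ 2)
    (x y : ℕ → EuclideanSpace ℝ (Fin n))
    (h0 : x 0 = y 0)
    (hx : ∀ t, x (t + 1) = x t - α • M (gradient (fsreg t) (x t)))
    (hy : ∀ t, y (t + 1) = (1 - lam) • y t - α • M (gradient (f t) (y t))) :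
    ∀ t, x t = y t := by
  have hgrad (t : ℕ) (θ : EuclideanSpace ℝ (Fin n)) : gradient (fsreg t) θ
      = gradient (f t) θ + (lam / α) • WithLp.toLp 2 fun i => s i * θ i := by
    rw [funext (hfsreg t)]
    exact gradient_add_half_mul_sum_mul_sq (hf t θ) (lam / α) s
  intro t
  induction t with
  | zero => exact h0
  | succ t ih =>
    rw [hx, hy, ← ih, hgrad, sub_smul_map_add_div_smul M hα.ne' lam
      (map_toLp_mul_eq_self (fun i => (hs i).ne') hM (x t))]

/-- Proposition 3 (iterates): the preconditioned method with fixed preconditioner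
`M = diag(s)⁻¹` executes the same steps on the scale-adjusted regularized batch losses
`f_t^sreg θ = f_t θ + (λ'/2)·∑ i, s i·(θ i)²` with `λ' = λ/α` (without weight decay) as it
executes on the unregularized batch losses with decoupled weight decay `λ`. -/
theorem preconditioned_sreg_iterates_eq_weight_decay_iterates
    (n : ℕ) (hn : 0 < n) (α lam : ℝ) (hα : 0 < α)
    (s : Fin n → ℝ) (hs : ∀ i, 0 < s i)
    (M : EuclideanSpace ℝ (Fin n) →ₗ[ℝ] EuclideanSpace ℝ (Fin n))
    (hM : ∀ (θ : EuclideanSpace ℝ (Fin n)) (i : Fin n), M θ i = θ i / s i)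
    (f : ℕ → EuclideanSpace ℝ (Fin n) → ℝ) (hf : ∀ t, Differentiable ℝ (f t))
    (fsreg : ℕ → EuclideanSpace ℝ (Fin n) → ℝ)
    (hfsreg : ∀ (t : ℕ) (θ : EuclideanSpace ℝ (Fin n)),
      fsreg t θ = f t θ + ((lam / α) / 2) * ∑ i, s i * (θ i) ^ 2)
    (x y : ℕ → EuclideanSpace ℝ (Fin n))
    (h0 : x 0 = y 0)
    (hx : ∀ t, x (t + 1) = x t - α • M (gradient (fsreg t) (x t)))
    (hy : ∀ t, y (t + 1) = (1 - lam) • y t - α • M (gradient (f t) (y t))) :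
    ∀ t, x t = y t :=
  preconditioned_sreg_iterates_eq_weight_decay_iterates_general n α lam hα s hs M hM f hf fsreg
    hfsreg x y h0 hx hy
end
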